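/- arXiv:2208.09752 — 3 statements merged into one kernel-verified Lean document; each statement's English description precedes it below -/
import Mathlib

section
/- A set R ⊆ {(i,j) : 1 ≤ i < j ≤ n} of pairs equals R(π) for some permutation π of {1,…,n} if and only if the following two conditions are satisfied: (1) if (i,j) ∈ R and (j,k) ∈ R, then (i,k) ∈ R; (2) if (i,k) ∈ R, then (i,j) ∈ R or (j,k) ∈ R for every j with i < j < k. -/
/-- `R(π) = {(i,j) : i < j ∧ π(i) > π(j)}`. -/
def Rset {n : ℕ} (π : Equiv.Perm (Fin n)) : Set (Fin n × Fin n) :=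
  {p | p.1 < p.2 ∧ π p.2 < π p.1}

/-- A set of pairs `(i,j)` with `i < j` comes from some permutation if and only
if it is "transitive" and "co-transitive" in the sense of Thurston. -/
theorem comes_from_permutation_iff (n : ℕ) (S : Set (Fin n × Fin n))
    (hS : ∀ p ∈ S, p.1 < p.2) :
    (∃ π : Equiv.Perm (Fin n), S = Rset π) ↔
      ((∀ i j k : Fin n, (i, j) ∈ S → (j, k) ∈ S → (i, k) ∈ S) ∧
       (∀ i j k : Fin n, (i, k) ∈ S → i < j → j < k → (i, j) ∈ S ∨ (j, k) ∈ S)) := by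
  constructor
  · rintro ⟨π, rfl⟩
    constructor
    · rintro i j k ⟨hij, hji⟩ ⟨hjk, hkj⟩
      exact ⟨hij.trans hjk, hkj.trans hji⟩
    · rintro i j k ⟨hik, hki⟩ hij hjk
      rcases lt_or_ge (π j) (π i) with h | h
      · exact Or.inl ⟨hij, h⟩
      · exact Or.inr ⟨hjk, hki.trans_le h⟩
  · rintro ⟨hT, hC⟩
    classical
    -- the linear order induced by S
    set r : Fin n → Fin n → Prop :=
      fun i j => (i < j ∧ (i, j) ∉ S) ∨ (j < i ∧ (j, i) ∈ S) with hr
    have hirr : ∀ i, ¬ r i i := by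
      rintro i (⟨h, -⟩ | ⟨h, -⟩) <;> exact lt_irrefl i h
    have htrans : ∀ i j k : Fin n, r i j → r j k → r i k := by
      rintro i j k (⟨hij, hs⟩ | ⟨hji, hs⟩) (⟨hjk, ht⟩ | ⟨hkj, ht⟩)
      · left
        refine ⟨hij.trans hjk, fun hik => ?_⟩
        rcases hC i j k hik hij hjk with h | h
        · exact hs h
        · exact ht h
      · rcases lt_trichotomy i k with h | h | h
        · left; exact ⟨h, fun hik => hs (hT i k j hik ht)⟩
        · exact absurd (h ▸ ht) hs
        · right
          refine ⟨h, ?_⟩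
          rcases hC k i j ht h hij with h' | h'
          · exact h'
          · exact absurd h' hs
      · rcases lt_trichotomy i k with h | h | h
        · left; exact ⟨h, fun hik => ht (hT j i k hs hik)⟩
        · exact absurd (h ▸ hs) ht
        · right
          refine ⟨h, ?_⟩
          rcases hC j k i hs hjk h with h' | h'
          · exact absurd h' ht
          · exact h'
      · right; exact ⟨hkj.trans hji, hT k j i ht hs⟩
    have htot : ∀ i j : Fin n, i ≠ j → r i j ∨ r j i := by
      intro i j hij
      rcases lt_trichotomy i j with h | h | h
      · by_cases hs : (i, j) ∈ S
        · exact Or.inr (Or.inr ⟨h, hs⟩)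
        · exact Or.inl (Or.inl ⟨h, hs⟩)
      · exact absurd h hij
      · by_cases hs : (j, i) ∈ S
        · exact Or.inl (Or.inr ⟨h, hs⟩)
        · exact Or.inr (Or.inl ⟨h, hs⟩)
    -- the rank function
    have hcard : ∀ i : Fin n, (Finset.univ.filter (fun j => r j i)).card < n := by
      intro i
      have : (Finset.univ.filter (fun j => r j i)) ⊂ Finset.univ := by
        refine Finset.ssubset_iff_of_subset (Finset.subset_univ _) |>.2 ⟨i, Finset.mem_univ i, ?_⟩
        simp [hirr i]
      simpa using Finset.card_lt_card this
    set f : Fin n → Fin n := fun i => ⟨(Finset.univ.filter (fun j => r j i)).card, hcard i⟩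
      with hf
    have hmono : ∀ i j : Fin n, r i j → f i < f j := by
      intro i j hij
      have hsub : insert i (Finset.univ.filter (fun k => r k i)) ⊆
          Finset.univ.filter (fun k => r k j) := by
        intro k hk
        rcases Finset.mem_insert.1 hk with rfl | hk
        · simp [hij]
        · have := (Finset.mem_filter.1 hk).2
          simp [htrans k i j this hij]
      have hni : i ∉ Finset.univ.filter (fun k => r k i) := by simp [hirr i]
      have := Finset.card_le_card hsub
      rw [Finset.card_insert_of_notMem hni] at this
      exact Nat.lt_of_lt_of_le (Nat.lt_succ_self _) this
    have hinj : Function.Injective f := by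
      intro i j hij
      by_contra hne
      rcases htot i j hne with h | h
      · exact absurd hij (ne_of_lt (hmono i j h)) 
      · exact absurd hij.symm (ne_of_lt (hmono j i h))
    have hbij : Function.Bijective f := (Finite.injective_iff_bijective).1 hinj
    refine ⟨Equiv.ofBijective f hbij, ?_⟩
    have hiff : ∀ i j : Fin n, i ≠ j → (f j < f i ↔ r j i) := by
      intro i j hij
      constructor
      · intro h
        rcases htot i j hij with h' | h'
        · exact absurd h (not_lt.2 (hmono i j h').le)
        · exact h'
      · exact hmono j i
    ext ⟨i, j⟩
    simp only [Rset, Set.mem_setOf_eq, Equiv.ofBijective_apply]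
    constructor
    · intro hij
      have hlt : i < j := hS _ hij
      refine ⟨hlt, (hiff i j (ne_of_lt hlt)).2 (Or.inr ⟨hlt, hij⟩)⟩
    · rintro ⟨hlt, hfj⟩
      rcases (hiff i j (ne_of_lt hlt)).1 hfj with ⟨h, -⟩ | ⟨-, h⟩
      · exact absurd hlt (not_lt.2 h.le)
      · exact h
end

section
/- If μ is a meandric permutation of {1,…,2n}, then the adjacency matrix of the meandric graph Γ(μ) is idempotent over the field GF(2). -/
/-- Two arcs `{a,b}` and `{c,d}` cross iff, after ordering each pair,
`a < c < b < d` or `c < a < d < b`. -/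
def ArcsCross (a b c d : ℕ) : Prop :=
  (min a b < min c d ∧ min c d < max a b ∧ max a b < max c d) ∨
  (min c d < min a b ∧ min a b < max c d ∧ max c d < max a b)

/-- A permutation `μ` of `{1,…,2n}` (with `μ 1 = 1`) is meandric if the lower
arcs `{μ(2k-1), μ(2k)}`, `k = 1,…,n`, are pairwise noncrossing and the upper
arcs `{μ(2k), μ(2k+1)}`, `k = 1,…,n` (cyclically, so the last one is
`{μ(2n), μ(1)}`), are pairwise noncrossing. -/
def IsMeandric (n : ℕ) (μ : ℕ → ℕ) : Prop :=
  (∀ k l : ℕ, 1 ≤ k → k ≤ n → 1 ≤ l → l ≤ n → k ≠ l →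
    ¬ ArcsCross (μ (2 * k - 1)) (μ (2 * k)) (μ (2 * l - 1)) (μ (2 * l))) ∧
  (∀ k l : ℕ, 1 ≤ k → k ≤ n → 1 ≤ l → l ≤ n → k ≠ l →
    ¬ ArcsCross (μ (2 * k)) (μ (2 * k % (2 * n) + 1))
        (μ (2 * l)) (μ (2 * l % (2 * n) + 1)))

/-- The adjacency matrix over `GF(2)` of the meandric graph `Γ(μ)` on the
vertex set `{0,1,…,2n}`: vertex `0` is adjacent to all other vertices, and
vertices `1 ≤ i < j ≤ 2n` are adjacent iff `μ i < μ j`. -/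
def meandricAdjMatrix (n : ℕ) (μ : ℕ → ℕ) :
    Matrix (Fin (2 * n + 1)) (Fin (2 * n + 1)) (ZMod 2) :=
  Matrix.of fun u v =>
    if u ≠ v ∧ (u.val = 0 ∨ v.val = 0 ∨
        μ (min u.val v.val) < μ (max u.val v.val)) then 1 else 0

namespace MeanderAux

/-- trip successor -/
def nx (n t : ℕ) : ℕ := t % (2 * n) + 1

/-- entry function of the adjacency matrix, on ℕ -/
def E (μ : ℕ → ℕ) (t s : ℕ) : ZMod 2 :=
  if t ≠ s ∧ (t = 0 ∨ s = 0 ∨ μ (min t s) < μ (max t s)) then 1 else 0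

section Basic

variable {n : ℕ} {μ : ℕ → ℕ} (hn : 0 < n)
  (hbij : Set.BijOn μ (Set.Icc 1 (2 * n)) (Set.Icc 1 (2 * n)))
  (h1 : μ 1 = 1) (hμ : IsMeandric n μ)

lemma nx_lt (t : ℕ) (h1t : 1 ≤ t) (ht : t < 2 * n) : nx n t = t + 1 := by
  unfold nx; rw [Nat.mod_eq_of_lt ht]

lemma nx_last : nx n (2 * n) = 1 := by unfold nx; rw [Nat.mod_self]

lemma nx_mem (t : ℕ) (h1t : 1 ≤ t) (ht : t ≤ 2 * n) : 1 ≤ nx n t ∧ nx n t ≤ 2 * n := by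
  rcases Nat.lt_or_ge t (2 * n) with h | h
  · rw [nx_lt t h1t h]; omega
  · have : t = 2 * n := by omega
    subst this; rw [nx_last]; omega

lemma nx_parity (t : ℕ) (h1t : 1 ≤ t) (ht : t ≤ 2 * n) : nx n t % 2 ≠ t % 2 := by
  rcases Nat.lt_or_ge t (2 * n) with h | h
  · rw [nx_lt t h1t h]; omega
  · have : t = 2 * n := by omega
    subst this; rw [nx_last]; omega

lemma nx_inj (t u : ℕ) (h1t : 1 ≤ t) (ht : t ≤ 2 * n) (h1u : 1 ≤ u) (hu : u ≤ 2 * n)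
    (h : nx n t = nx n u) : t = u := by
  unfold nx at h
  have h2 : t % (2 * n) = u % (2 * n) := by omega
  rcases Nat.lt_or_ge t (2 * n) with h3 | h3 <;> rcases Nat.lt_or_ge u (2 * n) with h4 | h4
  · rwa [Nat.mod_eq_of_lt h3, Nat.mod_eq_of_lt h4] at h2
  · have : u = 2 * n := by omega
    subst this; rw [Nat.mod_eq_of_lt h3, Nat.mod_self] at h2; omega
  · have : t = 2 * n := by omega
    subst this; rw [Nat.mod_self, Nat.mod_eq_of_lt h4] at h2; omega
  · omega

include hbij in
lemma mu_mem (t : ℕ) (h1t : 1 ≤ t) (ht : t ≤ 2 * n) : 1 ≤ μ t ∧ μ t ≤ 2 * n := by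
  have := hbij.mapsTo (show t ∈ Set.Icc 1 (2 * n) by simp [Set.mem_Icc]; omega)
  simpa [Set.mem_Icc] using this

include hbij in
lemma mu_inj (t u : ℕ) (h1t : 1 ≤ t) (ht : t ≤ 2 * n) (h1u : 1 ≤ u) (hu : u ≤ 2 * n)
    (h : μ t = μ u) : t = u :=
  hbij.injOn (by simp [Set.mem_Icc]; omega) (by simp [Set.mem_Icc]; omega) h

include hn hμ in
/-- noncrossing arcs, extracted from IsMeandric for same-parity trip indices. -/
lemma noncross (t u : ℕ) (h1t : 1 ≤ t) (ht : t ≤ 2 * n) (h1u : 1 ≤ u) (hu : u ≤ 2 * n)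
    (hne : t ≠ u) (hpar : t % 2 = u % 2) :
    ¬ ArcsCross (μ t) (μ (nx n t)) (μ u) (μ (nx n u)) := by
  rcases Nat.mod_two_eq_zero_or_one t with h2 | h2
  · -- t, u even : upper arcs
    have h2u : u % 2 = 0 := by omega
    have e1 : t = 2 * (t / 2) := by omega
    have e2 : u = 2 * (u / 2) := by omega
    have e3 : nx n t = 2 * (t / 2) % (2 * n) + 1 := by rw [← e1]; rfl
    have e4 : nx n u = 2 * (u / 2) % (2 * n) + 1 := by rw [← e2]; rfl
    rw [e3, e4]
    nth_rewrite 1 [e1]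
    nth_rewrite 1 [e2]
    exact hμ.2 (t / 2) (u / 2) (by omega) (by omega) (by omega) (by omega) (by omega)
  · -- t, u odd : lower arcs
    have h2u : u % 2 = 1 := by omega
    have htl : t < 2 * n := by omega
    have hul : u < 2 * n := by omega
    have e1 : t = 2 * ((t + 1) / 2) - 1 := by omega
    have e2 : u = 2 * ((u + 1) / 2) - 1 := by omega
    have e3 : nx n t = 2 * ((t + 1) / 2) := by rw [nx_lt t h1t htl]; omega
    have e4 : nx n u = 2 * ((u + 1) / 2) := by rw [nx_lt u h1u hul]; omega
    rw [e3, e4]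
    nth_rewrite 1 [e1]
    nth_rewrite 1 [e2]
    exact hμ.1 ((t + 1) / 2) ((u + 1) / 2) (by omega) (by omega) (by omega) (by omega)
      (by omega)

/-- interval equivalence from noncrossing -/
lemma interval_iff (a b c d : ℕ) (h : ¬ ArcsCross a b c d) (hca : c ≠ a) (hcb : c ≠ b)
    (hda : d ≠ a) (hdb : d ≠ b) :
    ((min a b < c ∧ c < max a b) ↔ (min a b < d ∧ d < max a b)) := by
  unfold ArcsCross at h; omega

end Basic



section LemC

variable {n : ℕ} {μ : ℕ → ℕ} (hn : 0 < n)
  (hbij : Set.BijOn μ (Set.Icc 1 (2 * n)) (Set.Icc 1 (2 * n)))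
  (h1 : μ 1 = 1) (hμ : IsMeandric n μ)

include hn hbij h1 hμ in
/-- Lemma C: parity of the number of visits strictly inside an arc's interval. -/
lemma lemC (u : ℕ) (h1u : 1 ≤ u) (hu : u ≤ 2 * n) :
    ∀ t, 1 ≤ t → t ≤ 2 * n + 1 →
    (∑ w ∈ Finset.Ico 1 t, if min (μ u) (μ (nx n u)) < μ w ∧ μ w < max (μ u) (μ (nx n u))
      then (1 : ZMod 2) else 0)
    = if min (μ u) (μ (nx n u)) < μ (if t = 2 * n + 1 then 1 else t)
        ∧ μ (if t = 2 * n + 1 then 1 else t) < max (μ u) (μ (nx n u))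
        ∧ t % 2 ≠ u % 2 then 1 else 0 := by
  have hm1 := mu_mem hbij u h1u hu
  have hmn := nx_mem u h1u hu
  have hm2 := mu_mem hbij (nx n u) hmn.1 hmn.2
  intro t h1t
  induction t, h1t using Nat.le_induction with
  | base =>
    intro _
    rw [ite_self, h1, Finset.Ico_self, Finset.sum_empty, eq_comm]
    rw [if_neg (by omega)]
  | succ t h1t ih =>
    intro ht
    have htn : t ≤ 2 * n := by omega
    have ihv := ih (by omega)
    rw [if_neg (show ¬ t = 2 * n + 1 by omega)] at ihv
    rw [Finset.sum_Ico_succ_top (by omega : 1 ≤ t), ihv]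
    have e5 : (if t + 1 = 2 * n + 1 then 1 else t + 1) = nx n t := by
      rcases Nat.lt_or_ge t (2 * n) with h | h
      · rw [if_neg (by omega), nx_lt t h1t h]
      · have he : t = 2 * n := by omega
        subst he; rw [if_pos rfl, nx_last]
    rw [e5]
    have hnt := nx_mem t h1t htn
    by_cases hp : t % 2 = u % 2
    · rw [if_neg (by simp [hp] : ¬(min (μ u) (μ (nx n u)) < μ t
        ∧ μ t < max (μ u) (μ (nx n u)) ∧ t % 2 ≠ u % 2)), zero_add]
      have hpar2 : (t + 1) % 2 ≠ u % 2 := by omega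
      rcases eq_or_ne t u with rfl | hne
      · rw [if_neg (by omega), if_neg (by omega)]
      · have hcrs := noncross hn hμ u t h1u hu h1t htn hne.symm hp.symm
        have d1 : μ t ≠ μ u := fun h => hne (mu_inj hbij t u h1t htn h1u hu h)
        have d2 : μ t ≠ μ (nx n u) := by
          intro h
          have := mu_inj hbij t (nx n u) h1t htn hmn.1 hmn.2 h
          have := nx_parity u h1u hu
          omega
        have d3 : μ (nx n t) ≠ μ u := by
          intro h
          have := mu_inj hbij (nx n t) u hnt.1 hnt.2 h1u hu h
          have := nx_parity t h1t htn
          omega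
        have d4 : μ (nx n t) ≠ μ (nx n u) := by
          intro h
          have := mu_inj hbij (nx n t) (nx n u) hnt.1 hnt.2 hmn.1 hmn.2 h
          exact hne (nx_inj t u h1t htn h1u hu this)
        have hiff := interval_iff (μ u) (μ (nx n u)) (μ t) (μ (nx n t)) hcrs d1 d2 d3 d4
        have : (min (μ u) (μ (nx n u)) < μ t ∧ μ t < max (μ u) (μ (nx n u)))
            ↔ (min (μ u) (μ (nx n u)) < μ (nx n t) ∧ μ (nx n t) < max (μ u) (μ (nx n u))
              ∧ (t + 1) % 2 ≠ u % 2) := by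
          rw [hiff]; tauto
        rw [if_congr this rfl rfl]
    · have hpar2 : (t + 1) % 2 = u % 2 := by omega
      rw [if_neg (by simp [hpar2] : ¬(min (μ u) (μ (nx n u)) < μ (nx n t)
        ∧ μ (nx n t) < max (μ u) (μ (nx n u)) ∧ (t + 1) % 2 ≠ u % 2))]
      have : (min (μ u) (μ (nx n u)) < μ t ∧ μ t < max (μ u) (μ (nx n u)) ∧ t % 2 ≠ u % 2)
          ↔ (min (μ u) (μ (nx n u)) < μ t ∧ μ t < max (μ u) (μ (nx n u))) := by tauto
      rw [if_congr this rfl rfl]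
      exact CharTwo.add_self_eq_zero _

end LemC

section Count

variable {n : ℕ} {μ : ℕ → ℕ}
  (hbij : Set.BijOn μ (Set.Icc 1 (2 * n)) (Set.Icc 1 (2 * n)))

include hbij in
lemma image_eq : Finset.image μ (Finset.Icc 1 (2 * n)) = Finset.Icc 1 (2 * n) := by
  apply Finset.eq_of_subset_of_card_le
  · intro v hv
    simp only [Finset.mem_image] at hv
    obtain ⟨w, hw, rfl⟩ := hv
    simp only [Finset.mem_Icc] at hw ⊢
    exact mu_mem hbij w hw.1 hw.2
  · rw [Finset.card_image_of_injOn (by rw [Finset.coe_Icc]; exact hbij.injOn)]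

include hbij in
lemma sum_comp (p : ℕ → Prop) [DecidablePred p] :
    ∑ w ∈ Finset.Icc 1 (2 * n), (if p (μ w) then (1 : ZMod 2) else 0)
      = ∑ v ∈ Finset.Icc 1 (2 * n), if p v then (1 : ZMod 2) else 0 := by
  conv_rhs => rw [← image_eq hbij]
  rw [Finset.sum_image]
  intro x hx y hy h
  exact hbij.injOn (by simpa using hx) (by simpa using hy) h

lemma sum_Ioo_const (a b : ℕ) (ha : 1 ≤ a) (hb : b ≤ 2 * n + 1) :
    (∑ v ∈ Finset.Icc 1 (2 * n), if a < v ∧ v < b then (1 : ZMod 2) else 0)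
      = ((b - a - 1 : ℕ) : ZMod 2) := by
  have hf : Finset.filter (fun v => a < v ∧ v < b) (Finset.Icc 1 (2 * n))
      = Finset.Ioo a b := by
    ext v; simp only [Finset.mem_filter, Finset.mem_Icc, Finset.mem_Ioo]; omega
  rw [Finset.sum_boole, hf, Nat.card_Ioo]

lemma sum_lt_const (b : ℕ) (hb : b ≤ 2 * n + 1) :
    (∑ v ∈ Finset.Icc 1 (2 * n), if v < b then (1 : ZMod 2) else 0)
      = ((b - 1 : ℕ) : ZMod 2) := by
  have hf : Finset.filter (fun v => v < b) (Finset.Icc 1 (2 * n))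
      = Finset.Ico 1 b := by
    ext v; simp only [Finset.mem_filter, Finset.mem_Icc, Finset.mem_Ico]; omega
  rw [Finset.sum_boole, hf, Nat.card_Ico]

lemma sum_gt_const (a : ℕ) (ha : 1 ≤ a) :
    (∑ v ∈ Finset.Icc 1 (2 * n), if a < v then (1 : ZMod 2) else 0)
      = ((2 * n - a : ℕ) : ZMod 2) := by
  have hf : Finset.filter (fun v => a < v) (Finset.Icc 1 (2 * n))
      = Finset.Ioc a (2 * n) := by
    ext v; simp only [Finset.mem_filter, Finset.mem_Icc, Finset.mem_Ioc]; omega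
  rw [Finset.sum_boole, hf, Nat.card_Ioc]

end Count

section ParityP

variable {n : ℕ} {μ : ℕ → ℕ} (hn : 0 < n)
  (hbij : Set.BijOn μ (Set.Icc 1 (2 * n)) (Set.Icc 1 (2 * n)))
  (h1 : μ 1 = 1) (hμ : IsMeandric n μ)

include hn hbij h1 hμ in
/-- Lemma P : the trip position parity. -/
lemma mu_parity : ∀ t, 1 ≤ t → t ≤ 2 * n → μ t % 2 = t % 2 := by
  intro t h1t
  induction t, h1t using Nat.le_induction with
  | base => intro _; rw [h1]
  | succ t h1t ih =>
    intro ht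
    have htn : t ≤ 2 * n := by omega
    have htl : t < 2 * n := by omega
    have ihv := ih (by omega)
    have hm1 := mu_mem hbij t h1t htn
    have hnt := nx_mem t h1t htn
    have hm2 := mu_mem hbij (nx n t) hnt.1 hnt.2
    have hC := lemC hn hbij h1 hμ t h1t htn (2 * n + 1) (by omega) (by omega)
    rw [if_pos rfl, h1, if_neg (by omega), Finset.Ico_add_one_right_eq_Icc,
      sum_comp hbij (fun v => min (μ t) (μ (nx n t)) < v ∧ v < max (μ t) (μ (nx n t))),
      sum_Ioo_const _ _ (by omega) (by omega)] at hC
    have hdvd : 2 ∣ (max (μ t) (μ (nx n t)) - min (μ t) (μ (nx n t)) - 1) := by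
      rwa [ZMod.natCast_eq_zero_iff] at hC
    have hne : μ t ≠ μ (nx n t) := by
      intro h
      have h2 := mu_inj hbij t (nx n t) h1t htn hnt.1 hnt.2 h
      have := nx_parity t h1t htn; omega
    have he : nx n t = t + 1 := nx_lt t h1t htl
    rw [he] at hdvd hne
    omega

end ParityP

section IdI

variable {n : ℕ} {μ : ℕ → ℕ} (hn : 0 < n)
  (hbij : Set.BijOn μ (Set.Icc 1 (2 * n)) (Set.Icc 1 (2 * n)))
  (h1 : μ 1 = 1) (hμ : IsMeandric n μ)

include hn hbij h1 hμ in
/-- Identity I : the key global parity identity. -/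
lemma idI (t : ℕ) (h2t : 2 ≤ t) :
    ∀ m s, t < s → s ≤ 2 * n → 2 * n = s + m →
    (∑ w ∈ Finset.Ioc s (2 * n), if μ w < μ t then (1 : ZMod 2) else 0)
      + (∑ w ∈ Finset.Ico 1 t, if μ w < μ s then (1 : ZMod 2) else 0)
    = (if t % 2 = 0 then 1 else 0)
      + (if (t + s) % 2 = 1 ∧ μ s < μ t then 1 else 0) := by
  intro m
  induction m with
  | zero =>
    intro s hts hs hm
    have hs2n : s = 2 * n := by omega
    subst hs2n
    have htn : t ≤ 2 * n := by omega
    have hm2n := mu_mem hbij (2 * n) (by omega) (by omega)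
    have hmt := mu_mem hbij t (by omega) htn
    rw [Finset.Ioc_self, Finset.sum_empty, zero_add]
    have h2 : 1 < μ (2 * n) := by
      rcases Nat.lt_or_ge 1 (μ (2 * n)) with h | h
      · exact h
      · exfalso
        have he : μ (2 * n) = μ 1 := by omega
        have := mu_inj hbij (2 * n) 1 (by omega) (by omega) (by omega) (by omega) he
        omega
    have hmt1 : 1 < μ t := by
      rcases Nat.lt_or_ge 1 (μ t) with h | h
      · exact h
      · exfalso
        have he : μ t = μ 1 := by omega
        have := mu_inj hbij t 1 (by omega) htn (by omega) (by omega) he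
        omega
    have hmtne : μ t ≠ μ (2 * n) := by
      intro h
      have := mu_inj hbij t (2 * n) (by omega) htn (by omega) (by omega) h
      omega
    have hsplit : ∀ w ∈ Finset.Ico 1 t, (if μ w < μ (2 * n) then (1 : ZMod 2) else 0)
        = (if μ w = 1 then 1 else 0)
          + (if 1 < μ w ∧ μ w < μ (2 * n) then 1 else 0) := by
      intro w hw
      simp only [Finset.mem_Ico] at hw
      have hmw := mu_mem hbij w hw.1 (by omega)
      have hne : μ w ≠ μ (2 * n) := by
        intro h
        have := mu_inj hbij w (2 * n) hw.1 (by omega) (by omega) (by omega) h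
        omega
      split_ifs <;> first | decide | (exfalso; omega)
    rw [Finset.sum_congr rfl hsplit, Finset.sum_add_distrib]
    have hone : (∑ w ∈ Finset.Ico 1 t, if μ w = 1 then (1 : ZMod 2) else 0) = 1 := by
      rw [Finset.sum_eq_single_of_mem 1 (by simp only [Finset.mem_Ico]; omega)]
      · rw [h1]; simp
      · intro w hw hne'
        simp only [Finset.mem_Ico] at hw
        rw [if_neg]
        intro h
        rw [← h1] at h
        exact hne' (mu_inj hbij w 1 hw.1 (by omega) (by omega) (by omega) h)
    have hCC := lemC hn hbij h1 hμ (2 * n) (by omega) (by omega) t (by omega) (by omega)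
    rw [nx_last, h1] at hCC
    rw [show min (μ (2 * n)) 1 = 1 by omega, show max (μ (2 * n)) 1 = μ (2 * n) by omega,
      if_neg (show ¬ t = 2 * n + 1 by omega)] at hCC
    rw [hone, hCC]
    split_ifs <;> first | decide | (exfalso; omega)
  | succ k ih =>
    intro s hts hs hm
    have hsl : s < 2 * n := by omega
    have h1s : 1 ≤ s := by omega
    have hmt := mu_mem hbij t (by omega) (by omega)
    have hms := mu_mem hbij s h1s (by omega)
    have hms1 := mu_mem hbij (s + 1) (by omega) (by omega)
    have dts : μ t ≠ μ s := by
      intro h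
      have := mu_inj hbij t s (by omega) (by omega) h1s (by omega) h
      omega
    have dts1 : μ t ≠ μ (s + 1) := by
      intro h
      have := mu_inj hbij t (s + 1) (by omega) (by omega) (by omega) (by omega) h
      omega
    have dss1 : μ s ≠ μ (s + 1) := by
      intro h
      have := mu_inj hbij s (s + 1) h1s (by omega) (by omega) (by omega) h
      omega
    have hins : Finset.Ioc s (2 * n) = insert (s + 1) (Finset.Ioc (s + 1) (2 * n)) := by
      ext v
      simp only [Finset.mem_Ioc, Finset.mem_insert]
      omega
    rw [hins, Finset.sum_insert (by simp only [Finset.mem_Ioc]; omega)]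
    have hpw : ∀ w ∈ Finset.Ico 1 t, (if μ w < μ s then (1 : ZMod 2) else 0)
        = (if μ w < μ (s + 1) then 1 else 0)
          + (if min (μ s) (μ (s + 1)) < μ w ∧ μ w < max (μ s) (μ (s + 1))
              then 1 else 0) := by
      intro w hw
      simp only [Finset.mem_Ico] at hw
      have hmw := mu_mem hbij w hw.1 (by omega)
      have d1 : μ w ≠ μ s := by
        intro h
        have := mu_inj hbij w s hw.1 (by omega) h1s (by omega) h
        omega
      have d2 : μ w ≠ μ (s + 1) := by
        intro h
        have := mu_inj hbij w (s + 1) hw.1 (by omega) (by omega) (by omega) h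
        omega
      split_ifs <;> first | decide | (exfalso; omega)
    rw [Finset.sum_congr rfl hpw, Finset.sum_add_distrib]
    have hnx : nx n s = s + 1 := nx_lt s h1s hsl
    have hCC := lemC hn hbij h1 hμ s h1s (by omega) t (by omega) (by omega)
    rw [hnx, if_neg (show ¬ t = 2 * n + 1 by omega)] at hCC
    rw [hCC]
    have ihv := ih (s + 1) (by omega) (by omega) (by omega)
    rw [show ((if μ (s + 1) < μ t then (1 : ZMod 2) else 0)
          + (∑ w ∈ Finset.Ioc (s + 1) (2 * n), if μ w < μ t then (1 : ZMod 2) else 0))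
        + ((∑ w ∈ Finset.Ico 1 t, if μ w < μ (s + 1) then (1 : ZMod 2) else 0)
          + (if min (μ s) (μ (s + 1)) < μ t ∧ μ t < max (μ s) (μ (s + 1))
              ∧ t % 2 ≠ s % 2 then 1 else 0))
        = ((∑ w ∈ Finset.Ioc (s + 1) (2 * n), if μ w < μ t then (1 : ZMod 2) else 0)
          + (∑ w ∈ Finset.Ico 1 t, if μ w < μ (s + 1) then (1 : ZMod 2) else 0))
          + ((if μ (s + 1) < μ t then (1 : ZMod 2) else 0)
          + (if min (μ s) (μ (s + 1)) < μ t ∧ μ t < max (μ s) (μ (s + 1))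
              ∧ t % 2 ≠ s % 2 then 1 else 0)) by ring, ihv]
    split_ifs <;> first | decide | (exfalso; omega)

end IdI

section L1

lemma cast_mod_eq (x y : ℕ) (h : x % 2 = y % 2) : ((x : ZMod 2) : ZMod 2) = (y : ZMod 2) := by
  rw [← ZMod.natCast_mod x 2, ← ZMod.natCast_mod y 2, h]

lemma odd_cast (x : ℕ) (h : x % 2 = 1) : ((x : ℕ) : ZMod 2) = 1 := by
  rw [← ZMod.natCast_mod x 2, h]; rfl

lemma even_cast (x : ℕ) (h : x % 2 = 0) : ((x : ℕ) : ZMod 2) = 0 := by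
  rw [← ZMod.natCast_mod x 2, h]; rfl

variable {n : ℕ} {μ : ℕ → ℕ} (hn : 0 < n)
  (hbij : Set.BijOn μ (Set.Icc 1 (2 * n)) (Set.Icc 1 (2 * n)))
  (h1 : μ 1 = 1) (hμ : IsMeandric n μ)

include hn hbij h1 hμ in
/-- L1 : each vertex 1 ≤ t ≤ 2n has an odd number of "agreeing" partners. -/
lemma rowL1 (t : ℕ) (h1t : 1 ≤ t) (ht : t ≤ 2 * n) :
    (∑ w ∈ Finset.Icc 1 (2 * n),
      if w ≠ t ∧ ((t < w ∧ μ t < μ w) ∨ (w < t ∧ μ w < μ t)) then (1 : ZMod 2) else 0)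
    = 1 := by
  have hmt := mu_mem hbij t h1t ht
  have hpt : ∀ w ∈ Finset.Icc 1 (2 * n),
      (if w ≠ t ∧ ((t < w ∧ μ t < μ w) ∨ (w < t ∧ μ w < μ t)) then (1 : ZMod 2) else 0)
      = (if w < t then 1 else 0) + (if μ t < μ w then 1 else 0) := by
    intro w hw
    simp only [Finset.mem_Icc] at hw
    rcases eq_or_ne w t with rfl | hne
    · split_ifs <;> first | decide | (exfalso; omega)
    · have hmw := mu_mem hbij w hw.1 hw.2
      have d1 : μ w ≠ μ t := fun h => hne (mu_inj hbij w t hw.1 hw.2 h1t ht h)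
      split_ifs <;> first | decide | (exfalso; omega)
  rw [Finset.sum_congr rfl hpt, Finset.sum_add_distrib,
    sum_lt_const (n := n) t (by omega),
    sum_comp hbij (fun v => μ t < v), sum_gt_const (μ t) (by omega)]
  have hpar := mu_parity hn hbij h1 hμ t h1t ht
  have : ((t - 1 : ℕ) : ZMod 2) + ((2 * n - μ t : ℕ) : ZMod 2)
      = ((t - 1 + (2 * n - μ t) : ℕ) : ZMod 2) := by push_cast; ring
  rw [this, odd_cast _ (by omega)]

end L1

section CN

variable {n : ℕ} {μ : ℕ → ℕ} (hn : 0 < n)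
  (hbij : Set.BijOn μ (Set.Icc 1 (2 * n)) (Set.Icc 1 (2 * n)))
  (h1 : μ 1 = 1) (hμ : IsMeandric n μ)

lemma sum_gt_split (s : ℕ) (p : ℕ → Prop) [DecidablePred p] :
    (∑ w ∈ Finset.Icc 1 (2 * n), if s < w ∧ p w then (1 : ZMod 2) else 0)
      = ∑ w ∈ Finset.Ioc s (2 * n), if p w then (1 : ZMod 2) else 0 := by
  have h1' : ∀ w ∈ Finset.Icc 1 (2 * n), (if s < w ∧ p w then (1 : ZMod 2) else 0)
      = if s < w then (if p w then (1 : ZMod 2) else 0) else 0 := by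
    intro w _; split_ifs <;> first | rfl | tauto
  rw [Finset.sum_congr rfl h1', ← Finset.sum_filter,
    show Finset.filter (fun w => s < w) (Finset.Icc 1 (2 * n)) = Finset.Ioc s (2 * n) from by
      ext v; simp only [Finset.mem_filter, Finset.mem_Icc, Finset.mem_Ioc]; omega]

lemma sum_lt_split (t : ℕ) (ht : t ≤ 2 * n + 1) (p : ℕ → Prop) [DecidablePred p] :
    (∑ w ∈ Finset.Icc 1 (2 * n), if w < t ∧ p w then (1 : ZMod 2) else 0)
      = ∑ w ∈ Finset.Ico 1 t, if p w then (1 : ZMod 2) else 0 := by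
  have h1' : ∀ w ∈ Finset.Icc 1 (2 * n), (if w < t ∧ p w then (1 : ZMod 2) else 0)
      = if w < t then (if p w then (1 : ZMod 2) else 0) else 0 := by
    intro w _; split_ifs <;> first | rfl | tauto
  rw [Finset.sum_congr rfl h1', ← Finset.sum_filter,
    show Finset.filter (fun w => w < t) (Finset.Icc 1 (2 * n)) = Finset.Ico 1 t from by
      ext v; simp only [Finset.mem_filter, Finset.mem_Icc, Finset.mem_Ico]; omega]

include hn hbij h1 hμ in
/-- L2 : parity of the number of common neighbours. -/
lemma rowCN (t s : ℕ) (h1t : 1 ≤ t) (hts : t < s) (hs : s ≤ 2 * n) :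
    (∑ w ∈ Finset.Icc 1 (2 * n),
      if w ≠ t ∧ w ≠ s ∧ ((t < w ∧ μ t < μ w) ∨ (w < t ∧ μ w < μ t))
        ∧ ((w < s ∧ μ w < μ s) ∨ (s < w ∧ μ s < μ w)) then (1 : ZMod 2) else 0)
    = 1 + (if μ t < μ s then 1 else 0) := by
  have hmt := mu_mem hbij t h1t (by omega)
  have hms := mu_mem hbij s (by omega) hs
  have dst : μ s ≠ μ t := by
    intro h
    have := mu_inj hbij s t (by omega) hs h1t (by omega) h
    omega
  rcases eq_or_lt_of_le h1t with rfl | h2t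
  · -- t = 1
    have h1s : 1 < μ s := by
      have : μ s ≠ μ 1 := by
        intro h
        have := mu_inj hbij s 1 (by omega) hs (by omega) (by omega) h
        omega
      omega
    have hpt : ∀ w ∈ Finset.Icc 1 (2 * n),
        (if w ≠ 1 ∧ w ≠ s ∧ ((1 < w ∧ μ 1 < μ w) ∨ (w < 1 ∧ μ w < μ 1))
          ∧ ((w < s ∧ μ w < μ s) ∨ (s < w ∧ μ s < μ w)) then (1 : ZMod 2) else 0)
        = (if w ≠ s ∧ ((s < w ∧ μ s < μ w) ∨ (w < s ∧ μ w < μ s)) then 1 else 0)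
          + (if w = 1 then 1 else 0) := by
      intro w hw
      simp only [Finset.mem_Icc] at hw
      rcases eq_or_ne w 1 with rfl | hw1
      · split_ifs <;> first | decide | (exfalso; omega)
      · have hmw := mu_mem hbij w hw.1 hw.2
        have d2 : μ w ≠ μ 1 := by
          intro h
          exact hw1 (mu_inj hbij w 1 hw.1 hw.2 (by omega) (by omega) h)
        rcases eq_or_ne w s with rfl | hws
        · split_ifs <;> first | decide | (exfalso; omega)
        · have d3 : μ w ≠ μ s := by
            intro h
            exact hws (mu_inj hbij w s hw.1 hw.2 (by omega) hs h)
          split_ifs <;> first | decide | (exfalso; omega)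
    rw [Finset.sum_congr rfl hpt, Finset.sum_add_distrib,
      rowL1 hn hbij h1 hμ s (by omega) hs]
    have hone : (∑ w ∈ Finset.Icc 1 (2 * n), if w = 1 then (1 : ZMod 2) else 0) = 1 := by
      rw [Finset.sum_eq_single_of_mem 1 (by simp only [Finset.mem_Icc]; omega)]
      · rw [if_pos rfl]
      · intro w _ hne
        exact if_neg hne
    rw [hone, if_pos (by omega : μ 1 < μ s)]
  · -- 2 ≤ t
    have hparT := mu_parity hn hbij h1 hμ t h1t (by omega)
    have hparS := mu_parity hn hbij h1 hμ s (by omega) hs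
    have hid := idI hn hbij h1 hμ t (by omega) (2 * n - s) s hts hs (by omega)
    rcases Nat.lt_or_ge (μ t) (μ s) with hc | hc
    · -- μ t < μ s
      have hpt : ∀ w ∈ Finset.Icc 1 (2 * n),
          (if w ≠ t ∧ w ≠ s ∧ ((t < w ∧ μ t < μ w) ∨ (w < t ∧ μ w < μ t))
            ∧ ((w < s ∧ μ w < μ s) ∨ (s < w ∧ μ s < μ w)) then (1 : ZMod 2) else 0)
          = (if s < w ∧ μ w < μ t then 1 else 0) + (if w < t ∧ μ w < μ s then 1 else 0)
            + (if μ t < μ w ∧ μ w < μ s then 1 else 0) + (if s < w then 1 else 0) := by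
        intro w hw
        simp only [Finset.mem_Icc] at hw
        rcases eq_or_ne w t with rfl | hwt
        · split_ifs <;> first | decide | (exfalso; omega)
        · have d2 : μ w ≠ μ t := fun h => hwt (mu_inj hbij w t hw.1 hw.2 h1t (by omega) h)
          rcases eq_or_ne w s with rfl | hws
          · split_ifs <;> first | decide | (exfalso; omega)
          · have d3 : μ w ≠ μ s := fun h => hws (mu_inj hbij w s hw.1 hw.2 (by omega) hs h)
            split_ifs <;> first | decide | (exfalso; omega)
      rw [Finset.sum_congr rfl hpt, Finset.sum_add_distrib, Finset.sum_add_distrib,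
        Finset.sum_add_distrib, sum_gt_split s (fun w => μ w < μ t),
        sum_lt_split t (by omega) (fun w => μ w < μ s),
        sum_comp hbij (fun v => μ t < v ∧ v < μ s),
        sum_Ioo_const (μ t) (μ s) (by omega) (by omega), sum_gt_const s (by omega)]
      rw [show (∑ w ∈ Finset.Ioc s (2 * n), if μ w < μ t then (1 : ZMod 2) else 0)
            + (∑ w ∈ Finset.Ico 1 t, if μ w < μ s then (1 : ZMod 2) else 0)
            + ((μ s - μ t - 1 : ℕ) : ZMod 2) + ((2 * n - s : ℕ) : ZMod 2)
          = ((∑ w ∈ Finset.Ioc s (2 * n), if μ w < μ t then (1 : ZMod 2) else 0)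
            + (∑ w ∈ Finset.Ico 1 t, if μ w < μ s then (1 : ZMod 2) else 0))
            + (((μ s - μ t - 1 : ℕ) : ZMod 2) + ((2 * n - s : ℕ) : ZMod 2)) from by ring,
        hid, if_neg (show ¬((t + s) % 2 = 1 ∧ μ s < μ t) from by omega), if_pos hc]
      rcases Nat.mod_two_eq_zero_or_one t with h2t' | h2t' <;>
        rcases Nat.mod_two_eq_zero_or_one s with h2s' | h2s'
      · rw [if_pos h2t', odd_cast (μ s - μ t - 1) (by omega),
          even_cast (2 * n - s) (by omega)]; decide
      · rw [if_pos h2t', even_cast (μ s - μ t - 1) (by omega),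
          odd_cast (2 * n - s) (by omega)]; decide
      · rw [if_neg (by omega : ¬ t % 2 = 0), even_cast (μ s - μ t - 1) (by omega),
          even_cast (2 * n - s) (by omega)]; decide
      · rw [if_neg (by omega : ¬ t % 2 = 0), odd_cast (μ s - μ t - 1) (by omega),
          odd_cast (2 * n - s) (by omega)]; decide
    · -- μ s < μ t
      have hc' : μ s < μ t := by omega
      have hpt : ∀ w ∈ Finset.Icc 1 (2 * n),
          (if w ≠ t ∧ w ≠ s ∧ ((t < w ∧ μ t < μ w) ∨ (w < t ∧ μ w < μ t))
            ∧ ((w < s ∧ μ w < μ s) ∨ (s < w ∧ μ s < μ w)) then (1 : ZMod 2) else 0)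
          = (if s < w ∧ μ w < μ t then 1 else 0) + (if w < t ∧ μ w < μ s then 1 else 0)
            + (if s < w then 1 else 0) := by
        intro w hw
        simp only [Finset.mem_Icc] at hw
        rcases eq_or_ne w t with rfl | hwt
        · split_ifs <;> first | decide | (exfalso; omega)
        · have d2 : μ w ≠ μ t := fun h => hwt (mu_inj hbij w t hw.1 hw.2 h1t (by omega) h)
          rcases eq_or_ne w s with rfl | hws
          · split_ifs <;> first | decide | (exfalso; omega)
          · have d3 : μ w ≠ μ s := fun h => hws (mu_inj hbij w s hw.1 hw.2 (by omega) hs h)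
            split_ifs <;> first | decide | (exfalso; omega)
      rw [Finset.sum_congr rfl hpt, Finset.sum_add_distrib, Finset.sum_add_distrib,
        sum_gt_split s (fun w => μ w < μ t),
        sum_lt_split t (by omega) (fun w => μ w < μ s), sum_gt_const s (by omega)]
      rw [show (∑ w ∈ Finset.Ioc s (2 * n), if μ w < μ t then (1 : ZMod 2) else 0)
            + (∑ w ∈ Finset.Ico 1 t, if μ w < μ s then (1 : ZMod 2) else 0)
            + ((2 * n - s : ℕ) : ZMod 2)
          = ((∑ w ∈ Finset.Ioc s (2 * n), if μ w < μ t then (1 : ZMod 2) else 0)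
            + (∑ w ∈ Finset.Ico 1 t, if μ w < μ s then (1 : ZMod 2) else 0))
            + ((2 * n - s : ℕ) : ZMod 2) from by ring,
        hid, if_neg (show ¬ μ t < μ s from by omega)]
      rcases Nat.mod_two_eq_zero_or_one t with h2t' | h2t' <;>
        rcases Nat.mod_two_eq_zero_or_one s with h2s' | h2s'
      · rw [if_pos h2t', if_neg (show ¬((t + s) % 2 = 1 ∧ μ s < μ t) from by omega),
          even_cast (2 * n - s) (by omega)]; decide
      · rw [if_pos h2t', if_pos (show (t + s) % 2 = 1 ∧ μ s < μ t from ⟨by omega, hc'⟩),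
          odd_cast (2 * n - s) (by omega)]; decide
      · rw [if_neg (show ¬ t % 2 = 0 from by omega),
          if_pos (show (t + s) % 2 = 1 ∧ μ s < μ t from ⟨by omega, hc'⟩),
          even_cast (2 * n - s) (by omega)]; decide
      · rw [if_neg (show ¬ t % 2 = 0 from by omega),
          if_neg (show ¬((t + s) % 2 = 1 ∧ μ s < μ t) from by omega),
          odd_cast (2 * n - s) (by omega)]; decide

end CN

section Assemble

lemma mul_ind (P Q : Prop) [Decidable P] [Decidable Q] :
    (if P then (1 : ZMod 2) else 0) * (if Q then 1 else 0) = if P ∧ Q then 1 else 0 := by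
  split_ifs <;> first | decide | tauto

variable {n : ℕ} {μ : ℕ → ℕ} (hn : 0 < n)
  (hbij : Set.BijOn μ (Set.Icc 1 (2 * n)) (Set.Icc 1 (2 * n)))
  (h1 : μ 1 = 1) (hμ : IsMeandric n μ)

lemma E00 : E μ 0 0 = 0 := by
  simp only [E]
  rw [if_neg (by simp)]

lemma E0l (w : ℕ) (hw : 1 ≤ w) : E μ 0 w = 1 := by
  simp only [E]
  split_ifs with h
  · rfl
  · exact absurd ⟨by omega, by tauto⟩ h

lemma E0r (w : ℕ) (hw : 1 ≤ w) : E μ w 0 = 1 := by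
  simp only [E]
  split_ifs with h
  · rfl
  · exact absurd ⟨by omega, by tauto⟩ h

lemma E_agree (t s : ℕ) (ht : 1 ≤ t) (hs : 1 ≤ s) :
    E μ t s = if (t < s ∧ μ t < μ s) ∨ (s < t ∧ μ s < μ t) then 1 else 0 := by
  simp only [E]
  rcases Nat.lt_trichotomy t s with h | rfl | h
  · rw [min_eq_left (le_of_lt h), max_eq_right (le_of_lt h)]
    exact if_congr (by omega) rfl rfl
  · rw [if_neg (by omega), if_neg (by omega)]
  · rw [min_eq_right (le_of_lt h), max_eq_left (le_of_lt h)]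
    exact if_congr (by omega) rfl rfl

lemma E_symm (t s : ℕ) : E μ t s = E μ s t := by
  simp only [E]
  rw [min_comm, max_comm]
  exact if_congr (by tauto) rfl rfl

include hn hbij h1 hμ in
lemma key_le (t s : ℕ) (ht : t ≤ 2 * n) (hs : s ≤ 2 * n) (hts : t ≤ s) :
    (∑ i ∈ Finset.range (2 * n + 1), E μ t i * E μ i s) = E μ t s := by
  rw [Finset.range_eq_Ico, Finset.sum_eq_sum_Ico_succ_bot (by omega : 0 < 2 * n + 1),
    Finset.Ico_add_one_right_eq_Icc]
  rcases Nat.eq_zero_or_pos t with rfl | h1t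
  · rcases Nat.eq_zero_or_pos s with rfl | h1s
    · -- t = s = 0
      rw [E00, zero_mul, zero_add]
      have hpt : ∀ w ∈ Finset.Icc 1 (2 * n), E μ 0 w * E μ w 0 = (1 : ZMod 2) := by
        intro w hw
        simp only [Finset.mem_Icc] at hw
        rw [E0l w hw.1, E0r w hw.1, one_mul]
      rw [Finset.sum_congr rfl hpt, Finset.sum_const, Nat.card_Icc, nsmul_eq_mul, mul_one,
        even_cast (2 * n + 1 - 1) (by omega)]
    · -- t = 0 < s
      rw [E00, zero_mul, zero_add]
      have hpt : ∀ w ∈ Finset.Icc 1 (2 * n), E μ 0 w * E μ w s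
          = if w ≠ s ∧ ((s < w ∧ μ s < μ w) ∨ (w < s ∧ μ w < μ s)) then (1 : ZMod 2)
            else 0 := by
        intro w hw
        simp only [Finset.mem_Icc] at hw
        rw [E0l w hw.1, one_mul, E_agree w s hw.1 h1s]
        exact if_congr (by omega) rfl rfl
      rw [Finset.sum_congr rfl hpt, rowL1 hn hbij h1 hμ s h1s hs, E0l s h1s]
  · rcases eq_or_lt_of_le hts with rfl | hlt
    · -- 1 ≤ t = s
      rw [E0r t h1t, E0l t h1t, one_mul]
      have hpt : ∀ w ∈ Finset.Icc 1 (2 * n), E μ t w * E μ w t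
          = if w ≠ t ∧ ((t < w ∧ μ t < μ w) ∨ (w < t ∧ μ w < μ t)) then (1 : ZMod 2)
            else 0 := by
        intro w hw
        simp only [Finset.mem_Icc] at hw
        rw [E_agree t w h1t hw.1, E_agree w t hw.1 h1t, mul_ind]
        exact if_congr (by omega) rfl rfl
      rw [Finset.sum_congr rfl hpt, rowL1 hn hbij h1 hμ t h1t ht]
      have : E μ t t = 0 := by
        simp only [E]; rw [if_neg (by omega)]
      rw [this]
      decide
    · -- 1 ≤ t < s
      have h1s : 1 ≤ s := by omega
      rw [E0r t h1t, E0l s h1s, one_mul]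
      have hpt : ∀ w ∈ Finset.Icc 1 (2 * n), E μ t w * E μ w s
          = if w ≠ t ∧ w ≠ s ∧ ((t < w ∧ μ t < μ w) ∨ (w < t ∧ μ w < μ t))
            ∧ ((w < s ∧ μ w < μ s) ∨ (s < w ∧ μ s < μ w)) then (1 : ZMod 2) else 0 := by
        intro w hw
        simp only [Finset.mem_Icc] at hw
        rw [E_agree t w h1t hw.1, E_agree w s hw.1 h1s, mul_ind]
        exact if_congr (by omega) rfl rfl
      rw [Finset.sum_congr rfl hpt, rowCN hn hbij h1 hμ t s h1t hlt hs,
        E_agree t s h1t h1s]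
      rw [if_congr (show ((t < s ∧ μ t < μ s) ∨ (s < t ∧ μ s < μ t)) ↔ (μ t < μ s)
        from by omega) rfl rfl]
      split_ifs <;> decide

include hn hbij h1 hμ in
lemma key (t s : ℕ) (ht : t ≤ 2 * n) (hs : s ≤ 2 * n) :
    (∑ i ∈ Finset.range (2 * n + 1), E μ t i * E μ i s) = E μ t s := by
  rcases le_total t s with h | h
  · exact key_le hn hbij h1 hμ t s ht hs h
  · have hpt : ∀ i ∈ Finset.range (2 * n + 1), E μ t i * E μ i s = E μ s i * E μ i t := by
      intro i _
      rw [E_symm t i, E_symm i s]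
      ring
    rw [Finset.sum_congr rfl hpt, key_le hn hbij h1 hμ s t hs ht h]
    exact E_symm s t

end Assemble

end MeanderAux

/-- The adjacency matrix of the meandric graph of a meandric permutation is
idempotent over `GF(2)`. -/
theorem meandric_adjMatrix_idempotent (n : ℕ) (μ : ℕ → ℕ) (hn : 0 < n)
    (hbij : Set.BijOn μ (Set.Icc 1 (2 * n)) (Set.Icc 1 (2 * n)))
    (h1 : μ 1 = 1) (hμ : IsMeandric n μ) :
    meandricAdjMatrix n μ * meandricAdjMatrix n μ = meandricAdjMatrix n μ := by
  ext u v
  rw [Matrix.mul_apply]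
  have hE : ∀ x y : Fin (2 * n + 1), meandricAdjMatrix n μ x y
      = MeanderAux.E μ x.val y.val := by
    intro x y
    simp only [meandricAdjMatrix, Matrix.of_apply, MeanderAux.E]
    exact if_congr (and_congr_left' (not_congr Fin.ext_iff)) rfl rfl
  simp only [hE]
  rw [Fin.sum_univ_eq_sum_range
    (fun i => MeanderAux.E μ u.val i * MeanderAux.E μ i v.val) (2 * n + 1)]
  exact MeanderAux.key hn hbij h1 hμ u.val v.val
    (by have := u.isLt; omega) (by have := v.isLt; omega)
end

section
/- Let Γ(μ) = (V, E) be the meandric graph of a meandric permutation μ of {1,…,2n}, and for a vertex v let N(v) denote the set of its neighbors. Then: |N(v)| is even for every vertex v; |N(v) ∩ N(u)| is even whenever u ∉ N(v) and u ≠ v; and |N(v) ∩ N(w)| is odd whenever w ∈ N(v). -/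
/-- The meandric graph `Γ(μ)` on the vertex set `{0,1,…,2n}`: vertex `0` is
adjacent to all other vertices, and vertices `1 ≤ i < j ≤ 2n` are adjacent iff
`μ i < μ j`. -/
def meandricGraph (n : ℕ) (μ : ℕ → ℕ) : SimpleGraph (Fin (2 * n + 1)) where
  Adj u v := u ≠ v ∧ (u.val = 0 ∨ v.val = 0 ∨
    μ (min u.val v.val) < μ (max u.val v.val))
  symm := by
    constructor
    intro u v h
    refine ⟨h.1.symm, ?_⟩
    rcases h.2 with h2 | h2 | h2
    · exact Or.inr (Or.inl h2)
    · exact Or.inl h2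
    · exact Or.inr (Or.inr (by rwa [min_comm, max_comm]))
  loopless := ⟨fun u h => h.1 rfl⟩

open Finset

variable {μ : ℕ → ℕ} {n N a b c i j k p q t x y : ℕ}

theorem Finset.Icc_filter_le {α : Type*} [LinearOrder α] [LocallyFiniteOrder α] (a b c : α) :
    {x ∈ Icc a b | x ≤ c} = Icc a (min b c) := by
  ext; simp only [mem_filter, mem_Icc, le_min_iff]; tauto

lemma card_filter_Icc_succ_right (p : ℕ → Prop) [DecidablePred p] (b : ℕ) :
    #{t ∈ Icc 1 (b + 1) | p t} = #{t ∈ Icc 1 b | p t} + if p (b + 1) then 1 else 0 := by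
  rw [← insert_Icc_right_eq_Icc_add_one (by omega), filter_insert]
  split_ifs <;> simp

lemma card_filter_comp_of_bijOn (hbij : Set.BijOn μ (Set.Icc 1 N) (Set.Icc 1 N))
    (p : ℕ → Prop) [DecidablePred p] :
    #{t ∈ Icc 1 N | p (μ t)} = #{v ∈ Icc 1 N | p v} := by
  refine card_nbij μ (fun t ht => ?_) (hbij.injOn.mono fun t ht => ?_) fun v hv => ?_
  · simp only [coe_filter, mem_Icc] at ht ⊢
    exact ⟨hbij.mapsTo ht.1, ht.2⟩
  · simp only [coe_filter, mem_Icc] at ht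
    exact ht.1
  · simp only [coe_filter, mem_Icc] at hv
    obtain ⟨t, ht, rfl⟩ := hbij.surjOn hv.1
    exact ⟨t, by simpa using ⟨ht, hv.2⟩, rfl⟩

lemma card_filter_le (hx : x ≤ N) : #{t ∈ Icc 1 N | t ≤ x} = x := by
  rw [Icc_filter_le, Nat.card_Icc]; omega

lemma card_filter_apply_le (hbij : Set.BijOn μ (Set.Icc 1 N) (Set.Icc 1 N)) (hy : y ≤ N) :
    #{t ∈ Icc 1 N | μ t ≤ y} = y :=
  (card_filter_comp_of_bijOn hbij (· ≤ y)).trans (card_filter_le hy)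

lemma card_filter_apply_eq (hbij : Set.BijOn μ (Set.Icc 1 N) (Set.Icc 1 N)) (hc : c ∈ Set.Icc 1 N)
    (hb : b ≤ N) : #{t ∈ Icc 1 b | μ t = μ c} = if c ≤ b then 1 else 0 := by
  rw [filter_congr fun t ht => hbij.injOn.eq_iff
    (by simp only [mem_Icc] at ht; exact ⟨ht.1, by omega⟩) hc, filter_eq']
  simp only [mem_Icc, hc.1, true_and]
  split_ifs <;> rfl

def NonInversion (μ : ℕ → ℕ) (i k : ℕ) : Prop := μ (min i k) < μ (max i k)

instance : DecidableRel (NonInversion μ) := fun _ _ => inferInstanceAs (Decidable (_ < _))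

lemma nonInversion_irrefl : ¬ NonInversion μ i i := by simp [NonInversion]

lemma nonInversion_iff : NonInversion μ i j ↔ i < j ∧ μ i < μ j ∨ j < i ∧ μ j < μ i := by
  unfold NonInversion
  rcases lt_trichotomy i j with h | rfl | h
  · simp [min_eq_left h.le, max_eq_right h.le, h, h.not_gt]
  · simp
  · simp [min_eq_right h.le, max_eq_left h.le, h, h.not_gt]

lemma nonInversion_indicator (hbij : Set.BijOn μ (Set.Icc 1 N) (Set.Icc 1 N))
    (hj : j ∈ Icc 1 N) (hk : k ∈ Icc 1 N) :
    (if NonInversion μ j k then 1 else 0 : ZMod 2) =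
      1 + (if k ≤ j then 1 else 0) + (if μ k ≤ μ j then 1 else 0) + if k = j then 1 else 0 := by
  have hinj : μ k = μ j ↔ k = j := hbij.injOn.eq_iff (by simpa using hk) (by simpa using hj)
  simp only [nonInversion_iff]
  split_ifs <;> first | decide | omega

lemma card_filter_nonInversion_modEq (hbij : Set.BijOn μ (Set.Icc 1 N) (Set.Icc 1 N))
    (hj : j ∈ Icc 1 N) {s : Finset ℕ} (hs : s ⊆ Icc 1 N) :
    #{k ∈ s | NonInversion μ j k} ≡
      #s + #{k ∈ s | k ≤ j} + #{k ∈ s | μ k ≤ μ j} + (if j ∈ s then 1 else 0) [MOD 2] := by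
  rw [← ZMod.natCast_eq_natCast_iff]
  push_cast
  rw [natCast_card_filter, sum_congr rfl fun k hk => nonInversion_indicator hbij hj (hs hk)]
  simp only [sum_add_distrib, sum_boole, sum_const, nsmul_one, filter_eq']
  split_ifs <;> simp

lemma card_nonInversion_modEq (hbij : Set.BijOn μ (Set.Icc 1 N) (Set.Icc 1 N))
    (hj : j ∈ Icc 1 N) : #{k ∈ Icc 1 N | NonInversion μ j k} ≡ N + j + μ j + 1 [MOD 2] := by
  have hμj : μ j ∈ Set.Icc 1 N := hbij.mapsTo (by simpa using hj)
  have := card_filter_nonInversion_modEq hbij hj subset_rfl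
  rwa [Nat.card_Icc, Nat.add_sub_cancel, card_filter_le (mem_Icc.mp hj).2,
    card_filter_apply_le hbij hμj.2, if_pos hj] at this

def rectCount (μ : ℕ → ℕ) (x y : ℕ) : ℕ := #{t ∈ Icc 1 x | μ t ≤ y}

lemma card_common_nonInversion_modEq (hbij : Set.BijOn μ (Set.Icc 1 N) (Set.Icc 1 N))
    (hi : i ∈ Icc 1 N) (hj : j ∈ Icc 1 N) (hij : i ≠ j) :
    #{k ∈ Icc 1 N | NonInversion μ i k ∧ NonInversion μ j k} ≡
      N + i + j + μ i + μ j + min i j + min (μ i) (μ j) + rectCount μ i (μ j) +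
        rectCount μ j (μ i) [MOD 2] := by
  -- Expand the indicator of `NonInversion μ j` over `{k | NonInversion μ i k}`, then that of
  -- `NonInversion μ i` over `Icc 1 j` and over `{k | μ k ≤ μ j}`.
  have hμi : μ i ∈ Set.Icc 1 N := hbij.mapsTo (by simpa using hi)
  have hμj : μ j ∈ Set.Icc 1 N := hbij.mapsTo (by simpa using hj)
  have hμij : μ i ≠ μ j := fun h => hij (hbij.injOn (by simpa using hi) (by simpa using hj) h)
  have hdeg := card_nonInversion_modEq hbij hi
  have hs := card_filter_nonInversion_modEq hbij (s := {k ∈ Icc 1 N | NonInversion μ i k}) hj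
    (filter_subset _ _)
  have hsj := card_filter_nonInversion_modEq hbij hi (Icc_subset_Icc_right (mem_Icc.mp hj).2)
  have hsμ := card_filter_nonInversion_modEq hbij (s := {k ∈ Icc 1 N | μ k ≤ μ j}) hi
    (filter_subset _ _)
  rw [mem_Icc] at hi hj
  rw [Set.mem_Icc] at hμi hμj
  have e₁ : {k ∈ {k ∈ Icc 1 N | NonInversion μ i k} | k ≤ j} =
      {k ∈ Icc 1 j | NonInversion μ i k} := by
    ext k; simp only [mem_filter, mem_Icc]; grind
  have e₂ : {k ∈ {k ∈ Icc 1 N | NonInversion μ i k} | μ k ≤ μ j} =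
      {k ∈ {k ∈ Icc 1 N | μ k ≤ μ j} | NonInversion μ i k} := filter_comm _ _ _
  have e₃ : {k ∈ {k ∈ Icc 1 N | μ k ≤ μ j} | k ≤ i} = {k ∈ Icc 1 i | μ k ≤ μ j} := by
    ext k; simp only [mem_filter, mem_Icc]; grind
  have e₄ : {k ∈ {k ∈ Icc 1 N | μ k ≤ μ j} | μ k ≤ μ i} =
      {k ∈ Icc 1 N | μ k ≤ min (μ i) (μ j)} := by
    ext k; simp only [mem_filter, le_min_iff]; tauto
  rw [filter_filter, e₁, e₂] at hs
  rw [Icc_filter_le, Nat.card_Icc, Nat.card_Icc] at hsj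
  rw [e₃, e₄, card_filter_apply_le hbij (y := min (μ i) (μ j)) (by omega),
    card_filter_apply_le hbij hμj.2] at hsμ
  have hmem : j ∈ {k ∈ Icc 1 N | NonInversion μ i k} ↔
      i < j ∧ μ i < μ j ∨ j < i ∧ μ j < μ i := by
    rw [mem_filter, mem_Icc, nonInversion_iff]; omega
  simp only [hmem] at hs
  simp only [mem_filter, mem_Icc, hi.1, hi.2, true_and] at hsj hsμ
  unfold Nat.ModEq rectCount at *
  split_ifs at hs hsj hsμ <;> omega

lemma rectCount_add_one (x y : ℕ) :
    rectCount μ (x + 1) y = rectCount μ x y + if μ (x + 1) ≤ y then 1 else 0 :=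
  card_filter_Icc_succ_right _ x

lemma rectCount_eq_add (b : ℕ) (hpq : p < q) :
    rectCount μ b q = rectCount μ b p + #{t ∈ Icc 1 b | p < μ t ∧ μ t < q} +
      #{t ∈ Icc 1 b | μ t = q} := by
  simp only [rectCount, card_filter, ← sum_add_distrib]
  exact sum_congr rfl fun t _ => by split_ifs <;> omega

def InsideArc (μ : ℕ → ℕ) (a x : ℕ) : Prop :=
  min (μ a) (μ (a + 1)) < x ∧ x < max (μ a) (μ (a + 1))

instance : DecidablePred (InsideArc μ a) := fun _ => inferInstanceAs (Decidable (_ ∧ _))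

lemma insideArc_iff_of_not_arcsCross (h : ¬ ArcsCross (μ a) (μ (a + 1)) x y)
    (hx : x ≠ μ a ∧ x ≠ μ (a + 1)) (hy : y ≠ μ a ∧ y ≠ μ (a + 1)) :
    InsideArc μ a x ↔ InsideArc μ a y := by
  unfold ArcsCross at h
  unfold InsideArc
  omega

lemma IsMeandric.not_arcsCross (hμ : IsMeandric n μ) (ha : 1 ≤ a) (ha' : a + 1 ≤ 2 * n)
    (hb : 1 ≤ b) (hb' : b + 1 ≤ 2 * n) (hab : a ≠ b) (hpar : a % 2 = b % 2) :
    ¬ ArcsCross (μ a) (μ (a + 1)) (μ b) (μ (b + 1)) := by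
  by_cases hodd : a % 2 = 1
  · have := hμ.1 ((a + 1) / 2) ((b + 1) / 2) (by omega) (by omega) (by omega) (by omega) (by omega)
    rwa [show 2 * ((a + 1) / 2) - 1 = a by omega, show 2 * ((a + 1) / 2) = a + 1 by omega,
      show 2 * ((b + 1) / 2) - 1 = b by omega, show 2 * ((b + 1) / 2) = b + 1 by omega] at this
  · have := hμ.2 (a / 2) (b / 2) (by omega) (by omega) (by omega) (by omega) (by omega)
    rwa [show 2 * (a / 2) = a by omega, show 2 * (b / 2) = b by omega,
      Nat.mod_eq_of_lt (by omega : a < 2 * n), Nat.mod_eq_of_lt (by omega : b < 2 * n)] at this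

lemma insideArc_iff_insideArc_succ (hbij : Set.BijOn μ (Set.Icc 1 (2 * n)) (Set.Icc 1 (2 * n)))
    (hμ : IsMeandric n μ) (ha : 1 ≤ a) (ha' : a + 1 ≤ 2 * n) (hb : 1 ≤ b) (hb' : b + 1 ≤ 2 * n)
    (hpar : b % 2 = a % 2) : InsideArc μ a (μ b) ↔ InsideArc μ a (μ (b + 1)) := by
  rcases eq_or_ne b a with rfl | hab
  · simp only [InsideArc]; omega
  exact insideArc_iff_of_not_arcsCross (hμ.not_arcsCross ha ha' hb hb' hab.symm hpar.symm)
    ⟨hbij.injOn.ne ⟨hb, by omega⟩ ⟨ha, by omega⟩ hab,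
      hbij.injOn.ne ⟨hb, by omega⟩ ⟨by omega, ha'⟩ (by omega)⟩
    ⟨hbij.injOn.ne ⟨by omega, hb'⟩ ⟨ha, by omega⟩ (by omega),
      hbij.injOn.ne ⟨by omega, hb'⟩ ⟨by omega, ha'⟩ (by omega)⟩

lemma not_insideArc_one (hbij : Set.BijOn μ (Set.Icc 1 N) (Set.Icc 1 N)) (ha : 1 ≤ a)
    (ha' : a + 1 ≤ N) : ¬ InsideArc μ a 1 := by
  have h₁ := (hbij.mapsTo (⟨ha, by omega⟩ : a ∈ Set.Icc 1 N)).1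
  have h₂ := (hbij.mapsTo (⟨by omega, ha'⟩ : a + 1 ∈ Set.Icc 1 N)).1
  simp only [InsideArc]
  omega

lemma not_insideArc_apply_two_mul (hbij : Set.BijOn μ (Set.Icc 1 (2 * n)) (Set.Icc 1 (2 * n)))
    (h1 : μ 1 = 1) (hμ : IsMeandric n μ) (ha : 1 ≤ a) (ha' : a + 1 ≤ 2 * n) (heven : a % 2 = 0) :
    ¬ InsideArc μ a (μ (2 * n)) := by
  have hc := hμ.2 (a / 2) n (by omega) (by omega) (by omega) le_rfl (by omega)
  rw [show 2 * (a / 2) = a by omega, Nat.mod_eq_of_lt (by omega : a < 2 * n), Nat.mod_self,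
    zero_add] at hc
  rw [insideArc_iff_of_not_arcsCross hc
    ⟨hbij.injOn.ne ⟨by omega, le_rfl⟩ ⟨ha, by omega⟩ (by omega),
      hbij.injOn.ne ⟨by omega, le_rfl⟩ ⟨by omega, ha'⟩ (by omega)⟩
    ⟨hbij.injOn.ne ⟨le_rfl, by omega⟩ ⟨ha, by omega⟩ (by omega),
      hbij.injOn.ne ⟨le_rfl, by omega⟩ ⟨by omega, ha'⟩ (by omega)⟩, h1]
  exact not_insideArc_one hbij ha ha'

/-- The positions `t` with `μ t` inside the arc at `a` come in pairs `{t, t + 1}` with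
`t ≡ a (mod 2)`. -/
lemma card_insideArc_mod_two (hbij : Set.BijOn μ (Set.Icc 1 (2 * n)) (Set.Icc 1 (2 * n)))
    (h1 : μ 1 = 1) (hμ : IsMeandric n μ) (ha : 1 ≤ a) (ha' : a + 1 ≤ 2 * n) (hb : 1 ≤ b)
    (hb' : b ≤ 2 * n) :
    #{t ∈ Icc 1 b | InsideArc μ a (μ t)} % 2 =
      if b % 2 = a % 2 ∧ InsideArc μ a (μ b) then 1 else 0 := by
  induction b, hb using Nat.le_induction with
  | base =>
    have := not_insideArc_one hbij ha ha'
    rw [← h1] at this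
    simp [filter_singleton, this]
  | succ b hb ih =>
    have ih := ih (by omega)
    rw [card_filter_Icc_succ_right]
    by_cases hpar : b % 2 = a % 2
    · have hpar' : (b + 1) % 2 ≠ a % 2 := by omega
      simp only [insideArc_iff_insideArc_succ hbij hμ ha ha' hb hb' hpar] at ih
      by_cases hin : InsideArc μ a (μ (b + 1)) <;> simp [hpar, hpar', hin] at ih ⊢ <;> omega
    · have hpar' : (b + 1) % 2 = a % 2 := by omega
      by_cases hin : InsideArc μ a (μ (b + 1)) <;> simp [hpar, hpar', hin] at ih ⊢ <;> omega

lemma apply_succ_mod_two_ne (hbij : Set.BijOn μ (Set.Icc 1 (2 * n)) (Set.Icc 1 (2 * n)))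
    (h1 : μ 1 = 1) (hμ : IsMeandric n μ) (ha : 1 ≤ a) (ha' : a + 1 ≤ 2 * n) :
    μ (a + 1) % 2 ≠ μ a % 2 := by
  have hK := card_insideArc_mod_two hbij h1 hμ ha ha' (by omega) le_rfl
  rw [card_filter_comp_of_bijOn hbij (InsideArc μ a), if_neg] at hK
  · have h₁ := hbij.mapsTo (⟨ha, by omega⟩ : a ∈ Set.Icc 1 (2 * n))
    have h₂ := hbij.mapsTo (⟨by omega, ha'⟩ : a + 1 ∈ Set.Icc 1 (2 * n))
    have hne : μ a ≠ μ (a + 1) := hbij.injOn.ne ⟨ha, by omega⟩ ⟨by omega, ha'⟩ (by omega)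
    rw [Set.mem_Icc] at h₁ h₂
    have hIoo : {v ∈ Icc 1 (2 * n) | InsideArc μ a v} =
        Ioo (min (μ a) (μ (a + 1))) (max (μ a) (μ (a + 1))) := by
      ext v
      simp only [mem_filter, mem_Icc, mem_Ioo]
      unfold InsideArc
      omega
    rw [hIoo, Nat.card_Ioo] at hK
    omega
  · rintro ⟨hpar, hin⟩
    exact not_insideArc_apply_two_mul hbij h1 hμ ha ha' (by omega) hin

lemma apply_mod_two (hbij : Set.BijOn μ (Set.Icc 1 (2 * n)) (Set.Icc 1 (2 * n)))
    (h1 : μ 1 = 1) (hμ : IsMeandric n μ) (ht : 1 ≤ t) (ht' : t ≤ 2 * n) : μ t % 2 = t % 2 := by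
  induction t, ht using Nat.le_induction with
  | base => rw [h1]
  | succ t ht ih =>
    have := apply_succ_mod_two_ne hbij h1 hμ ht ht'
    have := ih (by omega)
    omega

/-- Raising the height from `μ a` to `μ (a + 1)` passes the values inside the arc at `a` and
one endpoint of it. -/
lemma rectCount_apply_succ_mod_two (hbij : Set.BijOn μ (Set.Icc 1 (2 * n)) (Set.Icc 1 (2 * n)))
    (h1 : μ 1 = 1) (hμ : IsMeandric n μ) (hb : 1 ≤ b) (hba : b ≤ a) (ha : a + 1 ≤ 2 * n) :
    rectCount μ b (μ (a + 1)) % 2 = (rectCount μ b (μ a) +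
      (if b % 2 = a % 2 ∧ InsideArc μ a (μ b) then 1 else 0) +
      if b = a ∧ μ (a + 1) < μ a then 1 else 0) % 2 := by
  have hK := card_insideArc_mod_two hbij h1 hμ (hb.trans hba) ha hb (by omega)
  have hne : μ a ≠ μ (a + 1) := hbij.injOn.ne ⟨by omega, by omega⟩ ⟨by omega, ha⟩ (by omega)
  rcases hne.lt_or_gt with hlt | hlt
  · rw [filter_congr fun t _ => show InsideArc μ a (μ t) ↔ μ a < μ t ∧ μ t < μ (a + 1) by
      simp only [InsideArc, min_eq_left hlt.le, max_eq_right hlt.le]] at hK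
    rw [rectCount_eq_add b hlt, card_filter_apply_eq hbij ⟨by omega, ha⟩ (by omega)]
    split_ifs at hK ⊢ <;> omega
  · rw [filter_congr fun t _ => show InsideArc μ a (μ t) ↔ μ (a + 1) < μ t ∧ μ t < μ a by
      simp only [InsideArc, min_eq_right hlt.le, max_eq_left hlt.le]] at hK
    rw [rectCount_eq_add b hlt, card_filter_apply_eq hbij ⟨by omega, by omega⟩ (by omega)]
    split_ifs at hK ⊢ <;> omega

lemma rectCount_add_rectCount_mod_two
    (hbij : Set.BijOn μ (Set.Icc 1 (2 * n)) (Set.Icc 1 (2 * n))) (h1 : μ 1 = 1)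
    (hμ : IsMeandric n μ) (hb : 1 ≤ b) (hba : b ≤ a) (ha : a ≤ 2 * n) :
    (rectCount μ a (μ b) + rectCount μ b (μ a)) % 2 = if μ a < μ b then (1 + a + b) % 2 else 0 := by
  induction a, hba using Nat.le_induction with
  | base => simp only [lt_irrefl, if_false]; omega
  | succ a hba ih =>
    have hstep := rectCount_apply_succ_mod_two hbij h1 hμ hb hba ha
    have hne : μ b ≠ μ (a + 1) := hbij.injOn.ne ⟨hb, by omega⟩ ⟨by omega, ha⟩ (by omega)
    rw [rectCount_add_one]
    unfold InsideArc at hstep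
    rcases hba.eq_or_lt with rfl | hlt
    · split_ifs at hstep ⊢ <;> omega
    · have ih := ih (by omega)
      have hne' : μ b ≠ μ a := hbij.injOn.ne ⟨hb, by omega⟩ ⟨by omega, by omega⟩ hlt.ne
      split_ifs at ih hstep ⊢ <;> omega

lemma odd_card_nonInversion (hbij : Set.BijOn μ (Set.Icc 1 (2 * n)) (Set.Icc 1 (2 * n)))
    (h1 : μ 1 = 1) (hμ : IsMeandric n μ) (hi : i ∈ Icc 1 (2 * n)) :
    Odd #{k ∈ Icc 1 (2 * n) | NonInversion μ i k} := by
  have h := card_nonInversion_modEq hbij hi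
  have hpar := apply_mod_two hbij h1 hμ (mem_Icc.mp hi).1 (mem_Icc.mp hi).2
  rw [Nat.odd_iff]
  unfold Nat.ModEq at h
  omega

lemma odd_card_common_nonInversion_iff
    (hbij : Set.BijOn μ (Set.Icc 1 (2 * n)) (Set.Icc 1 (2 * n))) (h1 : μ 1 = 1)
    (hμ : IsMeandric n μ) (hi : i ∈ Icc 1 (2 * n)) (hj : j ∈ Icc 1 (2 * n)) (hij : i ≠ j) :
    Odd #{k ∈ Icc 1 (2 * n) | NonInversion μ i k ∧ NonInversion μ j k} ↔
      ¬ NonInversion μ i j := by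
  have h := card_common_nonInversion_modEq hbij hi hj hij
  have hμij : μ i ≠ μ j := hbij.injOn.ne (by simpa using hi) (by simpa using hj) hij
  rw [mem_Icc] at hi hj
  have hpi := apply_mod_two hbij h1 hμ hi.1 hi.2
  have hpj := apply_mod_two hbij h1 hμ hj.1 hj.2
  rw [Nat.odd_iff, nonInversion_iff]
  unfold Nat.ModEq at h
  rcases hij.lt_or_gt with hlt | hlt
  · have := rectCount_add_rectCount_mod_two hbij h1 hμ hi.1 hlt.le hj.2
    split_ifs at this <;> omega
  · have := rectCount_add_rectCount_mod_two hbij h1 hμ hj.1 hlt.le hi.2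
    split_ifs at this <;> omega

def meandricNbrs (μ : ℕ → ℕ) (N i : ℕ) : Finset ℕ :=
  {k ∈ range (N + 1) | i ≠ k ∧ (i = 0 ∨ k = 0 ∨ NonInversion μ i k)}

lemma meandricNbrs_subset_range : meandricNbrs μ N i ⊆ range (N + 1) := filter_subset _ _

lemma meandricNbrs_zero : meandricNbrs μ N 0 = Icc 1 N := by
  ext k; simp only [meandricNbrs, mem_filter, mem_range, mem_Icc, true_or, and_true]; omega

lemma meandricNbrs_of_ne_zero (hi : i ≠ 0) :
    meandricNbrs μ N i = insert 0 {k ∈ Icc 1 N | NonInversion μ i k} := by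
  ext k
  rcases eq_or_ne i k with rfl | hik
  · simp [meandricNbrs, nonInversion_irrefl, hi]
  rcases Nat.eq_zero_or_pos k with rfl | hk
  · simp [meandricNbrs, hi]
  · simp only [meandricNbrs, mem_filter, mem_range, mem_insert, mem_Icc, hik, hi, hk.ne',
      false_or, ne_eq, not_false_eq_true, true_and]
    exact and_congr_left fun _ => by omega

lemma even_card_meandricNbrs (hbij : Set.BijOn μ (Set.Icc 1 (2 * n)) (Set.Icc 1 (2 * n)))
    (h1 : μ 1 = 1) (hμ : IsMeandric n μ) (hi : i ≤ 2 * n) :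
    Even #(meandricNbrs μ (2 * n) i) := by
  rcases eq_or_ne i 0 with rfl | hi0
  · rw [meandricNbrs_zero, Nat.card_Icc]
    exact ⟨n, by omega⟩
  · rw [meandricNbrs_of_ne_zero hi0, card_insert_of_notMem (by simp)]
    exact (odd_card_nonInversion hbij h1 hμ (mem_Icc.mpr ⟨by omega, hi⟩)).add_one

lemma odd_card_meandricNbrs_inter_iff
    (hbij : Set.BijOn μ (Set.Icc 1 (2 * n)) (Set.Icc 1 (2 * n))) (h1 : μ 1 = 1)
    (hμ : IsMeandric n μ) (hi : i ≤ 2 * n) (hj : j ≤ 2 * n) (hij : i ≠ j) :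
    Odd #(meandricNbrs μ (2 * n) i ∩ meandricNbrs μ (2 * n) j) ↔
      i = 0 ∨ j = 0 ∨ NonInversion μ i j := by
  have hzero {i j : ℕ} (hi : i = 0) (hj : j ≤ 2 * n) (hij : i ≠ j) :
      #(meandricNbrs μ (2 * n) i ∩ meandricNbrs μ (2 * n) j) =
        #{k ∈ Icc 1 (2 * n) | NonInversion μ j k} := by
    rw [hi, meandricNbrs_zero, meandricNbrs_of_ne_zero (by omega), inter_insert_of_notMem (by simp),
      inter_eq_right.mpr (filter_subset _ _)]
  rcases eq_or_ne i 0 with hi0 | hi0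
  · rw [hzero hi0 hj hij]
    exact iff_of_true (odd_card_nonInversion hbij h1 hμ (mem_Icc.mpr ⟨by omega, hj⟩)) (.inl hi0)
  rcases eq_or_ne j 0 with hj0 | hj0
  · rw [inter_comm, hzero hj0 hi hij.symm]
    exact iff_of_true (odd_card_nonInversion hbij h1 hμ (mem_Icc.mpr ⟨by omega, hi⟩))
      (.inr (.inl hj0))
  rw [meandricNbrs_of_ne_zero hi0, meandricNbrs_of_ne_zero hj0, ← insert_inter_distrib,
    ← filter_and, card_insert_of_notMem (by simp), Nat.odd_add_one, odd_card_common_nonInversion_iff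
      hbij h1 hμ (mem_Icc.mpr ⟨by omega, hi⟩) (mem_Icc.mpr ⟨by omega, hj⟩) hij]
  simp [hi0, hj0]

lemma neighborSet_meandricGraph (v : Fin (2 * n + 1)) :
    (meandricGraph n μ).neighborSet v = Fin.val ⁻¹' ↑(meandricNbrs μ (2 * n) v) := by
  ext w
  simp only [SimpleGraph.mem_neighborSet, Set.mem_preimage, mem_coe, meandricNbrs, mem_filter,
    mem_range, w.isLt, true_and]
  exact and_congr_left' Fin.val_injective.ne_iff.symm

lemma ncard_preimage_val (s : Finset ℕ) (hs : s ⊆ range (N + 1)) :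
    (Fin.val ⁻¹' (s : Set ℕ) : Set (Fin (N + 1))).ncard = #s := by
  rw [Set.ncard_preimage_of_injective_subset_range Fin.val_injective, Set.ncard_coe_finset]
  exact fun k hk => ⟨⟨k, mem_range.mp (hs hk)⟩, rfl⟩

theorem meandric_graph_neighbor_parities_general (n : ℕ) (μ : ℕ → ℕ)
    (hbij : Set.BijOn μ (Set.Icc 1 (2 * n)) (Set.Icc 1 (2 * n)))
    (h1 : μ 1 = 1) (hμ : IsMeandric n μ) :
    (∀ v, Even ((meandricGraph n μ).neighborSet v).ncard) ∧
    (∀ v u, u ≠ v → u ∉ (meandricGraph n μ).neighborSet v →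
      Even (((meandricGraph n μ).neighborSet v) ∩
        ((meandricGraph n μ).neighborSet u)).ncard) ∧
    (∀ v w, w ∈ (meandricGraph n μ).neighborSet v →
      Odd (((meandricGraph n μ).neighborSet v) ∩
        ((meandricGraph n μ).neighborSet w)).ncard) := by
  have hle (v : Fin (2 * n + 1)) : v.val ≤ 2 * n := Nat.lt_succ_iff.mp v.isLt
  have hcommon (v w : Fin (2 * n + 1)) (hvw : v ≠ w) :
      Odd ((meandricGraph n μ).neighborSet v ∩ (meandricGraph n μ).neighborSet w).ncard ↔
        (meandricGraph n μ).Adj v w := by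
    rw [neighborSet_meandricGraph, neighborSet_meandricGraph, ← Set.preimage_inter, ← coe_inter,
      ncard_preimage_val _ (inter_subset_left.trans meandricNbrs_subset_range),
      odd_card_meandricNbrs_inter_iff hbij h1 hμ (hle v) (hle w) (Fin.val_ne_of_ne hvw)]
    exact (and_iff_right hvw).symm
  refine ⟨fun v => ?_, fun v u huv hu => ?_, fun v w hw => (hcommon v w ?_).mpr hw⟩
  · rw [neighborSet_meandricGraph, ncard_preimage_val _ meandricNbrs_subset_range]
    exact even_card_meandricNbrs hbij h1 hμ (hle v)
  · exact Nat.not_odd_iff_even.mp fun h => hu ((hcommon v u huv.symm).mp h)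
  · exact ((meandricGraph n μ).mem_neighborSet v w).mp hw |>.ne

/-- In a meandric graph: every vertex has an even number of neighbors;
nonadjacent distinct vertices have an even number of common neighbors;
adjacent vertices have an odd number of common neighbors. -/
theorem meandric_graph_neighbor_parities (n : ℕ) (μ : ℕ → ℕ) (hn : 0 < n)
    (hbij : Set.BijOn μ (Set.Icc 1 (2 * n)) (Set.Icc 1 (2 * n)))
    (h1 : μ 1 = 1) (hμ : IsMeandric n μ) :
    (∀ v, Even ((meandricGraph n μ).neighborSet v).ncard) ∧
    (∀ v u, u ≠ v → u ∉ (meandricGraph n μ).neighborSet v →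
      Even (((meandricGraph n μ).neighborSet v) ∩
        ((meandricGraph n μ).neighborSet u)).ncard) ∧
    (∀ v w, w ∈ (meandricGraph n μ).neighborSet v →
      Odd (((meandricGraph n μ).neighborSet v) ∩
        ((meandricGraph n μ).neighborSet w)).ncard) :=
  meandric_graph_neighbor_parities_general n μ hbij h1 hμ
end
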